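/- arXiv:2106.00554 — 2 statements merged into one kernel-verified Lean document; each statement's English description precedes it below -/
import Mathlib

section
/- Let j ∈ ℕ and let n, l ∈ ℕ satisfy n < 2^j and l < 2^j. Then w_n(2^{−j} l) = w_l(2^{−j} n). -/
open MeasureTheory

/-- `natDigit n i` is the `i`-th binary digit `n^(i)` (for `i ≥ 1`) of `n ∈ ℕ`,
so that `n = Σ_{i ≥ 1} n^(i) 2^(i-1)`. -/
def natDigit (n i : ℕ) : ℕ := (n / 2 ^ (i - 1)) % 2

/-- `dyadicDigit x i` is the `i`-th dyadic digit `x^(i) = ⌊2^i x⌋ − 2⌊2^(i−1) x⌋`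
(for `i ≥ 1`) of `x ∈ [0,1)`. -/
noncomputable def dyadicDigit (x : ℝ) (i : ℕ) : ℤ :=
  ⌊(2 : ℝ) ^ i * x⌋ - 2 * ⌊(2 : ℝ) ^ (i - 1) * x⌋

/-- The sequency-ordered Walsh function
`w_n(x) = (−1)^{Σ_{i≥1} (n^(i) + n^(i+1)) x^(i)}`; the sum is finite since
`n^(i) = 0` for `i > n`, so it may be truncated at `i = n + 1`. -/
noncomputable def walsh (n : ℕ) (x : ℝ) : ℝ :=
  (-1 : ℝ) ^ ∑ i ∈ Finset.Icc 1 (n + 1),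
    (natDigit n i + natDigit n (i + 1)) * (dyadicDigit x i).toNat

/-- The dyadic XOR `x ⊕ y := Σ_{i≥1} |x^(i) − y^(i)| 2^{−i}` of `x, y ∈ [0,1)`. -/
noncomputable def dyadicXor (x y : ℝ) : ℝ :=
  ∑' i : ℕ, |(dyadicDigit x (i + 1) : ℝ) - (dyadicDigit y (i + 1) : ℝ)| / 2 ^ (i + 1)

/-! With `β_k(m) := natDigit m (k + 1)` the `k`-th bit of `m`, the dyadic digits of `l / 2^j` are
the bits of `l` in reverse order, so the exponent of `w_n(l / 2^j)` is
`Σ_{a+b=j-1} (β_a(n) + β_{a+1}(n)) β_b(l)`. Both halves are coefficients of the Cauchy product of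
the bit sequences of `n` and `l` (the second one at index `j`, after adding the term
`β_0(n) β_j(l) = 0`), and such coefficients are symmetric in `n` and `l`. -/

open Finset

lemma natDigit_eq_zero_of_lt_two_pow {n i j : ℕ} (hn : n < 2 ^ j) (hi : j < i) :
    natDigit n i = 0 := by
  have : n < 2 ^ (i - 1) := hn.trans_le (Nat.pow_le_pow_right two_pos (by omega))
  simp [natDigit, Nat.div_eq_of_lt this]

lemma dyadicDigit_succ {x : ℝ} (hx : 0 ≤ x) (k : ℕ) :
    dyadicDigit x (k + 1) = ((⌊2 ^ (k + 1) * x⌋₊ % 2 : ℕ) : ℤ) := by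
  have hy : 0 ≤ 2 ^ (k + 1) * x := by positivity
  have half : (2 : ℝ) ^ k * x = 2 ^ (k + 1) * x / (2 : ℕ) := by push_cast; ring
  rw [dyadicDigit, Nat.add_sub_cancel, half, ← Int.natCast_floor_eq_floor hy,
    ← Int.natCast_floor_eq_floor (by positivity), Nat.floor_div_natCast]
  omega

lemma dyadicDigit_natCast_div_two_pow (l j k : ℕ) :
    (dyadicDigit ((l : ℝ) / 2 ^ j) (k + 1)).toNat = if k < j then natDigit l (j - k) else 0 := by
  have hfloor : ⌊(2 : ℝ) ^ (k + 1) * ((l : ℝ) / 2 ^ j)⌋₊ = l * 2 ^ (k + 1) / 2 ^ j := by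
    rw [← Nat.floor_div_eq_div (K := ℝ)]; push_cast; ring_nf
  rw [dyadicDigit_succ (by positivity), hfloor, Int.toNat_natCast]
  split_ifs with hk
  · obtain ⟨d, rfl⟩ := Nat.exists_eq_add_of_lt hk
    rw [show k + d + 1 = (k + 1) + d by omega, pow_add 2 (k + 1), ← Nat.div_div_eq_div_mul,
      Nat.mul_div_cancel _ (by positivity), natDigit, show k + 1 + d - k - 1 = d by omega]
  · obtain ⟨d, rfl⟩ := Nat.exists_eq_add_of_le (not_lt.1 hk)
    rw [show j + d + 1 = (d + 1) + j by omega, pow_add, ← mul_assoc,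
      Nat.mul_div_cancel _ (by positivity), pow_succ]
    simp [← mul_assoc]

lemma sum_range_eq_sum_range_of_eq_zero {M : Type*} [AddCommMonoid M] {f : ℕ → M} {a b : ℕ}
    (ha : ∀ k, a ≤ k → f k = 0) (hb : ∀ k, b ≤ k → f k = 0) :
    ∑ k ∈ range a, f k = ∑ k ∈ range b, f k := by
  wlog hab : a ≤ b generalizing a b
  · exact (this hb ha (by omega)).symm
  refine sum_subset (range_subset_range.2 hab) fun k _ hk => ha k ?_
  simpa using hk

lemma walsh_natCast_div_two_pow (n l j : ℕ) :
    walsh n ((l : ℝ) / 2 ^ j) = (-1) ^ ∑ k ∈ range j,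
      (natDigit n (k + 1) + natDigit n (k + 2)) * natDigit l (j - k) := by
  have high_bits_vanish : ∀ k, n + 1 ≤ k → natDigit n (k + 1) + natDigit n (k + 2) = 0 := fun k hk => by
    simp [natDigit_eq_zero_of_lt_two_pow n.lt_two_pow_self (by omega : n < k + 1),
      natDigit_eq_zero_of_lt_two_pow n.lt_two_pow_self (by omega : n < k + 2)]
  rw [walsh, ← Ico_add_one_right_eq_Icc, sum_Ico_eq_sum_range]
  simp only [add_comm 1, add_assoc, Nat.reduceAdd, dyadicDigit_natCast_div_two_pow]
  rw [sum_range_eq_sum_range_of_eq_zero (b := j)]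
  · refine congrArg _ (sum_congr rfl fun k hk => ?_)
    rw [if_pos (mem_range.1 hk)]
  · intro k hk
    rw [high_bits_vanish k (by omega), zero_mul]
  · intro k hk
    rw [if_neg (by omega), mul_zero]

def bitConv (m n l : ℕ) : ℕ :=
  ∑ p ∈ antidiagonal m, natDigit n (p.1 + 1) * natDigit l (p.2 + 1)

lemma bitConv_comm (m n l : ℕ) : bitConv m n l = bitConv m l n := by
  rw [bitConv, bitConv, ← Nat.sum_antidiagonal_swap]
  simp only [Prod.fst_swap, Prod.snd_swap, mul_comm]

lemma bitConv_succ {m n l : ℕ} (hl : l < 2 ^ (m + 1)) :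
    bitConv (m + 1) n l = ∑ p ∈ antidiagonal m, natDigit n (p.1 + 2) * natDigit l (p.2 + 1) := by
  rw [bitConv, Nat.sum_antidiagonal_succ, natDigit_eq_zero_of_lt_two_pow hl (by omega), mul_zero,
    zero_add]

lemma walsh_natCast_div_two_pow_succ (n : ℕ) {l m : ℕ} (hl : l < 2 ^ (m + 1)) :
    walsh n ((l : ℝ) / 2 ^ (m + 1)) = (-1) ^ (bitConv m n l + bitConv (m + 1) n l) := by
  rw [walsh_natCast_div_two_pow, bitConv_succ hl, bitConv, ← sum_add_distrib,
    Nat.sum_antidiagonal_eq_sum_range_succ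
      (fun a b => natDigit n (a + 1) * natDigit l (b + 1) + natDigit n (a + 2) * natDigit l (b + 1))]
  refine congrArg _ (sum_congr rfl fun k hk => ?_)
  rw [show m + 1 - k = m - k + 1 by have := mem_range.1 hk; omega, add_mul]

/-- For `n, l < 2^j` one has `w_n(2^{−j} l) = w_l(2^{−j} n)`. -/
theorem walsh_symm (j n l : ℕ) (hn : n < 2 ^ j) (hl : l < 2 ^ j) :
    walsh n ((l : ℝ) / 2 ^ j) = walsh l ((n : ℝ) / 2 ^ j) := by
  cases j with
  | zero =>
    obtain rfl : n = 0 := by simpa using hn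
    obtain rfl : l = 0 := by simpa using hl
    rfl
  | succ m =>
    rw [walsh_natCast_div_two_pow_succ n hl, walsh_natCast_div_two_pow_succ l hn, bitConv_comm m,
      bitConv_comm (m + 1)]
end

section
/- Let j ∈ ℕ, n ∈ ℕ and x ∈ [0,1). Then w_n(2^{−j} x) = w_{⌊n/2^j⌋}(x). -/
open MeasureTheory

/-!
Dividing by `2 ^ j` shifts the dyadic digits of `x` by `j` places (the first `j` digits of
`x / 2 ^ j` vanish), and `n / 2 ^ j` shifts the binary digits of `n` by the same `j` places.
After reindexing, the exponent of `-1` on both sides is the same sum.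
-/

open Finset

theorem Finset.sum_Icc_one_eq_sum_range {M : Type*} [AddCommMonoid M] (f : ℕ → M) (N : ℕ) :
    ∑ i ∈ Icc 1 N, f i = ∑ i ∈ range N, f (i + 1) := by
  rw [← Ico_add_one_right_eq_Icc, sum_Ico_eq_sum_range, Nat.add_sub_cancel]
  simp only [add_comm]

lemma natDigit_eq_zero_of_add_two_le {n i : ℕ} (h : n + 2 ≤ i) : natDigit n i = 0 := by
  have : n < 2 ^ (i - 1) := n.lt_two_pow_self.trans_le (Nat.pow_le_pow_right two_pos (by omega))
  simp [natDigit, Nat.div_eq_of_lt this]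

lemma natDigit_div_two_pow (n j : ℕ) {k : ℕ} (hk : 1 ≤ k) :
    natDigit (n / 2 ^ j) k = natDigit n (j + k) := by
  rw [natDigit, natDigit, Nat.div_div_eq_div_mul, ← pow_add, Nat.add_sub_assoc hk]

lemma dyadicDigit_div_two_pow (x : ℝ) (j : ℕ) {k : ℕ} (hk : 1 ≤ k) :
    dyadicDigit (x / 2 ^ j) (j + k) = dyadicDigit x k := by
  have shift (l : ℕ) : (2 : ℝ) ^ (j + l) * (x / 2 ^ j) = 2 ^ l * x := by
    rw [pow_add]; field_simp
  rw [dyadicDigit, dyadicDigit, Nat.add_sub_assoc hk, shift, shift]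

lemma floor_two_pow_mul_div_two_pow_eq_zero {x : ℝ} (hx : x ∈ Set.Ico (0 : ℝ) 1) {l j : ℕ}
    (h : l ≤ j) : ⌊(2 : ℝ) ^ l * (x / 2 ^ j)⌋ = 0 := by
  have hle : (2 : ℝ) ^ l / 2 ^ j ≤ 1 :=
    div_le_one_of_le₀ (pow_le_pow_right₀ one_le_two h) (by positivity)
  rw [Int.floor_eq_zero_iff, mul_div_left_comm]
  exact ⟨mul_nonneg hx.1 (by positivity), (mul_le_of_le_one_right hx.1 hle).trans_lt hx.2⟩

lemma dyadicDigit_div_two_pow_of_le {x : ℝ} (hx : x ∈ Set.Ico (0 : ℝ) 1) {i j : ℕ}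
    (h : i ≤ j) : dyadicDigit (x / 2 ^ j) i = 0 := by
  rw [dyadicDigit, floor_two_pow_mul_div_two_pow_eq_zero hx h,
    floor_two_pow_mul_div_two_pow_eq_zero hx (by omega), mul_zero, sub_zero]

noncomputable def walshSummand (n : ℕ) (x : ℝ) (i : ℕ) : ℕ :=
  (natDigit n i + natDigit n (i + 1)) * (dyadicDigit x i).toNat

lemma walsh_eq_of_le {n N : ℕ} (x : ℝ) (hN : n + 1 ≤ N) :
    walsh n x = (-1) ^ ∑ i ∈ range N, walshSummand n x (i + 1) := by
  rw [walsh, sum_Icc_one_eq_sum_range]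
  refine congrArg _ (eventually_constant_sum (fun i hi => ?_) hN).symm
  show walshSummand n x (i + 1) = 0
  rw [walshSummand, natDigit_eq_zero_of_add_two_le (show n + 2 ≤ i + 1 by omega),
    natDigit_eq_zero_of_add_two_le (show n + 2 ≤ i + 1 + 1 by omega), add_zero, zero_mul]

lemma walshSummand_div_two_pow (n j : ℕ) (x : ℝ) {k : ℕ} (hk : 1 ≤ k) :
    walshSummand n (x / 2 ^ j) (j + k) = walshSummand (n / 2 ^ j) x k := by
  rw [walshSummand, walshSummand, natDigit_div_two_pow n j hk,
    natDigit_div_two_pow n j (by omega : 1 ≤ k + 1), dyadicDigit_div_two_pow x j hk, add_assoc]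

lemma walshSummand_div_two_pow_of_le (n : ℕ) {x : ℝ} (hx : x ∈ Set.Ico (0 : ℝ) 1) {i j : ℕ}
    (h : i ≤ j) : walshSummand n (x / 2 ^ j) i = 0 := by
  rw [walshSummand, dyadicDigit_div_two_pow_of_le hx h, Int.toNat_zero, mul_zero]

/-- For `j, n ∈ ℕ` and `x ∈ [0,1)`, `w_n(2^{−j} x) = w_{⌊n/2^j⌋}(x)`. -/
theorem walsh_scale (j n : ℕ) (x : ℝ) (hx : x ∈ Set.Ico (0 : ℝ) 1) :
    walsh n (x / 2 ^ j) = walsh (n / 2 ^ j) x := by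
  have low : ∑ i ∈ range j, walshSummand n (x / 2 ^ j) (i + 1) = 0 :=
    sum_eq_zero fun i hi => walshSummand_div_two_pow_of_le n hx (mem_range.mp hi)
  have high : ∑ i ∈ range (n + 1), walshSummand n (x / 2 ^ j) (j + i + 1)
      = ∑ i ∈ range (n + 1), walshSummand (n / 2 ^ j) x (i + 1) :=
    sum_congr rfl fun i _ => walshSummand_div_two_pow n j x (Nat.le_add_left 1 i)
  rw [walsh_eq_of_le (x / 2 ^ j) (show n + 1 ≤ j + (n + 1) by omega), sum_range_add, low,
    zero_add, high,
    walsh_eq_of_le x (show n / 2 ^ j + 1 ≤ n + 1 from Nat.succ_le_succ (Nat.div_le_self _ _))]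
end
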